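/- Let M be a hypermodular rank-4 matroid containing a line l₁ and a plane (hyperplane) e₁ with l₁ ∩ e₁ = ∅. Then M contains two disjoint coplanar lines; more precisely, for any point p ∈ e₁, the set l₂ = cl(l₁ ∪ p) ∩ e₁ is a line disjoint from and coplanar with l₁. -/

import Mathlib

open Set

namespace StickyKantor

variable {α : Type*}

/-- The rank of a set in a matroid, as an integer (junk value `0` when infinite). -/
noncomputable def rk (M : Matroid α) (X : Set α) : ℤ :=
  ((⨆ I ∈ {I : Set α | M.Indep I ∧ I ⊆ X}, I.encard).toNat : ℤ)

/-- The modular defect of a pair of sets. -/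
noncomputable def mdefect (M : Matroid α) (X Y : Set α) : ℤ :=
  rk M X + rk M Y - rk M (X ∪ Y) - rk M (X ∩ Y)

/-- A modular pair of sets. -/
def ModularPair (M : Matroid α) (X Y : Set α) : Prop :=
  rk M X + rk M Y = rk M (X ∪ Y) + rk M (X ∩ Y)

/-- `M'` is an extension of `M`: it has a larger ground set and restricts to `M`. -/
def IsExtension (M' M : Matroid α) : Prop :=
  M.E ⊆ M'.E ∧ M = M'.restrict M.E

/-- A point: a rank-1 flat. -/
def IsPoint (M : Matroid α) (p : Set α) : Prop := M.IsFlat p ∧ rk M p = 1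

/-- A line: a rank-2 flat. -/
def IsLine (M : Matroid α) (l : Set α) : Prop := M.IsFlat l ∧ rk M l = 2

/-- A plane: a rank-3 flat. -/
def IsPlane (M : Matroid α) (e : Set α) : Prop := M.IsFlat e ∧ rk M e = 3

/-- Two lines are coplanar if their join has rank at most 3. -/
def Coplanar (M : Matroid α) (l₁ l₂ : Set α) : Prop := rk M (l₁ ∪ l₂) ≤ 3

/-- A hyperplane: a maximal proper flat. -/
def IsHyperplane (M : Matroid α) (H : Set α) : Prop :=
  M.IsFlat H ∧ H ≠ M.E ∧ ∀ F, M.IsFlat F → H ⊂ F → F = M.E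

/-- A matroid is hypermodular if every pair of hyperplanes is a modular pair. -/
def Hypermodular (M : Matroid α) : Prop :=
  ∀ H₁ H₂, IsHyperplane M H₁ → IsHyperplane M H₂ → ModularPair M H₁ H₂

/-- A matroid is modular if every pair of flats is a modular pair. -/
def Modular (M : Matroid α) : Prop :=
  ∀ F₁ F₂, M.IsFlat F₁ → M.IsFlat F₂ → ModularPair M F₁ F₂

/-- A modular cut: an up-closed family of flats closed under intersections of
modular pairs. -/
def IsModularCut (M : Matroid α) (𝓜 : Set (Set α)) : Prop :=
  (∀ F ∈ 𝓜, M.IsFlat F) ∧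
  (∀ F ∈ 𝓜, ∀ F', M.IsFlat F' → F ⊆ F' → F' ∈ 𝓜) ∧
  (∀ F₁ ∈ 𝓜, ∀ F₂ ∈ 𝓜, ModularPair M F₁ F₂ → F₁ ∩ F₂ ∈ 𝓜)

/-- The principal modular cut of a flat `F`. -/
def principalCut (M : Matroid α) (F : Set α) : Set (Set α) :=
  {G | M.IsFlat G ∧ F ⊆ G}

/-- The modular cut generated by a family of flats. -/
def genCut (M : Matroid α) (A : Set (Set α)) : Set (Set α) :=
  ⋂₀ {𝓜 | IsModularCut M 𝓜 ∧ A ⊆ 𝓜}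

/-- A non-modular pair of flats is intersectable if the modular cut it generates is
not the principal modular cut of its intersection. -/
def Intersectable (M : Matroid α) (X Y : Set α) : Prop :=
  genCut M {X, Y} ≠ principalCut M (X ∩ Y)

/-- A matroid is OTE (only trivially extendable) if every nonempty modular cut
is principal. -/
def OTE (M : Matroid α) : Prop :=
  ∀ 𝓜, IsModularCut M 𝓜 → 𝓜 ≠ ∅ → ∃ F, M.IsFlat F ∧ 𝓜 = principalCut M F

/-- A matroid is sticky if every pair of extensions meeting exactly in its ground set
has an amalgam. -/
def Sticky (M : Matroid α) : Prop :=
  ∀ N₁ N₂ : Matroid α, IsExtension N₁ M → IsExtension N₂ M → N₁.E ∩ N₂.E = M.E →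
    ∃ A : Matroid α, A.E = N₁.E ∪ N₂.E ∧ IsExtension A N₁ ∧ IsExtension A N₂

/-- The function `η` of the amalgam construction. -/
noncomputable def eta (M M₁ M₂ : Matroid α) (X : Set α) : ℤ :=
  rk M₁ (X ∩ M₁.E) + rk M₂ (X ∩ M₂.E) - rk M (X ∩ M.E)

/-- The function `ξ` of the amalgam construction. -/
noncomputable def xi (M M₁ M₂ : Matroid α) (X : Set α) : ℤ :=
  sInf {n : ℤ | ∃ Y, X ⊆ Y ∧ Y ⊆ M₁.E ∪ M₂.E ∧ n = eta M M₁ M₂ Y}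

/-- The lattice `𝓛(M₁,M₂)` of sets whose traces on both ground sets are flats. -/
def latticeL (M₁ M₂ : Matroid α) : Set (Set α) :=
  {X | X ⊆ M₁.E ∪ M₂.E ∧ M₁.IsFlat (X ∩ M₁.E) ∧ M₂.IsFlat (X ∩ M₂.E)}

/-!
The plane `P = cl(l₁ ∪ {p})` contains `l₁`, so it differs from `e₁`, which misses `l₁`.
Two distinct hyperplanes span the whole matroid, so hypermodularity gives
`rk (P ∩ e₁) = 3 + 3 - 4 = 2`. The line `P ∩ e₁` lies in the plane `P` together with `l₁`,
and misses `l₁` because `e₁` does.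
-/

lemma _root_.Matroid.IsFlat.inter {M : Matroid α} {F G : Set α} (hF : M.IsFlat F)
    (hG : M.IsFlat G) : M.IsFlat (F ∩ G) := by
  rw [inter_eq_iInter]
  exact Matroid.IsFlat.iInter fun b ↦ by cases b <;> assumption

lemma rk_eq_toNat_eRk (M : Matroid α) (X : Set α) : rk M X = (M.eRk X).toNat := by
  have hsup : ⨆ I ∈ {I : Set α | M.Indep I ∧ I ⊆ X}, I.encard = M.eRk X :=
    le_antisymm (iSup₂_le fun _ hI ↦ hI.1.encard_le_eRk_of_subset hI.2)
      (Matroid.eRk_le_iff.2 fun I hIX hI ↦ le_iSup₂_of_le I ⟨hI, hIX⟩ le_rfl)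
  rw [rk, hsup]

lemma rk_closure (M : Matroid α) (X : Set α) : rk M (M.closure X) = rk M X := by
  rw [rk_eq_toNat_eRk, rk_eq_toNat_eRk, Matroid.eRk_closure_eq]

lemma rk_empty (M : Matroid α) : rk M ∅ = 0 := by
  rw [rk_eq_toNat_eRk, Matroid.eRk_empty]
  rfl

section RankFinite

variable {M : Matroid α} [M.RankFinite] {X Y F G : Set α}

lemma rk_le_rk_iff : rk M X ≤ rk M Y ↔ M.eRk X ≤ M.eRk Y := by
  rw [rk_eq_toNat_eRk, rk_eq_toNat_eRk, Nat.cast_le,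
    ← ENat.natCast_le_natCast, ENat.natCast_toNat (M.isRkFinite_set X).eRk_lt_top.ne,
    ENat.natCast_toNat (M.isRkFinite_set Y).eRk_lt_top.ne]

lemma rk_mono (hXY : X ⊆ Y) : rk M X ≤ rk M Y :=
  rk_le_rk_iff.2 (M.eRk_mono hXY)

lemma rk_insert_of_mem_diff_closure {e : α} (he : e ∈ M.E \ M.closure X) :
    rk M (insert e X) = rk M X + 1 := by
  rw [rk_eq_toNat_eRk, rk_eq_toNat_eRk, Matroid.eRk_insert_eq_add_one he,
    ENat.toNat_add (M.isRkFinite_set X).eRk_lt_top.ne ENat.one_ne_top]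
  simp

lemma _root_.Matroid.IsFlat.eq_of_subset_of_rk_le (hF : M.IsFlat F) (hG : M.IsFlat G)
    (hFG : F ⊆ G) (h : rk M G ≤ rk M F) : F = G := by
  rw [← hF.closure, ← hG.closure]
  exact (M.isRkFinite_set F).closure_eq_closure_of_subset_of_eRk_ge_eRk hFG (rk_le_rk_iff.1 h)

lemma isHyperplane_of_rk_add_one_eq (hF : M.IsFlat F) (h : rk M F + 1 = rk M M.E) :
    IsHyperplane M F := by
  refine ⟨hF, fun hFE ↦ by rw [hFE] at h; omega, fun G hG hFG ↦ ?_⟩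
  have hlt : rk M F < rk M G :=
    lt_of_not_ge fun hle ↦ hFG.ne (hF.eq_of_subset_of_rk_le hG hFG.subset hle)
  exact hG.eq_of_subset_of_rk_le M.ground_isFlat hG.subset_ground (by omega)

end RankFinite

lemma IsHyperplane.closure_union_eq_ground {M : Matroid α} {H₁ H₂ : Set α}
    (h₁ : IsHyperplane M H₁) (h₂ : IsHyperplane M H₂) (hne : H₁ ≠ H₂) :
    M.closure (H₁ ∪ H₂) = M.E := by
  have hsub : H₁ ∪ H₂ ⊆ M.closure (H₁ ∪ H₂) :=
    M.subset_closure _ (union_subset h₁.1.subset_ground h₂.1.subset_ground)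
  refine h₁.2.2 _ (M.isFlat_closure _) (ssubset_of_subset_of_ne (subset_union_left.trans hsub) ?_)
  intro heq
  have h₂₁ : H₂ ⊂ H₁ := ssubset_of_subset_of_ne (heq ▸ subset_union_right.trans hsub) hne.symm
  exact h₁.2.1 (h₂.2.2 H₁ h₁.1 h₂₁)

lemma Hypermodular.rk_inter_of_ne {M : Matroid α} {H₁ H₂ : Set α} (hM : Hypermodular M)
    (h₁ : IsHyperplane M H₁) (h₂ : IsHyperplane M H₂) (hne : H₁ ≠ H₂) :
    rk M (H₁ ∩ H₂) = rk M H₁ + rk M H₂ - rk M M.E := by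
  have hmod := hM H₁ H₂ h₁ h₂
  rw [ModularPair, ← rk_closure M (H₁ ∪ H₂), h₁.closure_union_eq_ground h₂ hne] at hmod
  omega

/-- a hypermodular rank-4 matroid with a disjoint line-plane pair
contains two disjoint coplanar lines. -/
theorem hypermodular_disjoint_coplanar_lines (M : Matroid α) [M.RankFinite]
    (hhm : Hypermodular M) (hrank : rk M M.E = 4)
    (l₁ e₁ : Set α) (hl : IsLine M l₁) (he : IsPlane M e₁)
    (hdisj : l₁ ∩ e₁ = ∅) (p : α) (hp : p ∈ e₁) :
    IsLine M (M.closure (l₁ ∪ {p}) ∩ e₁) ∧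
      l₁ ∩ (M.closure (l₁ ∪ {p}) ∩ e₁) = ∅ ∧
      Coplanar M l₁ (M.closure (l₁ ∪ {p}) ∩ e₁) := by
  obtain ⟨hl₁, hl₁_rk⟩ := hl
  obtain ⟨he₁, he₁_rk⟩ := he
  set P := M.closure (l₁ ∪ {p})
  have hpE : p ∈ M.E := he₁.subset_ground hp
  have hpl₁ : p ∉ M.closure l₁ := fun h ↦ hdisj.subset ⟨hl₁.closure ▸ h, hp⟩
  have hl₁P : l₁ ⊆ P := M.subset_closure_of_subset' subset_union_left hl₁.subset_ground
  have hP_rk : rk M P = 3 := by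
    rw [rk_closure, union_singleton, rk_insert_of_mem_diff_closure ⟨hpE, hpl₁⟩, hl₁_rk]
    norm_num
  have hPe₁ : P ≠ e₁ := by
    intro h
    have hl₁_empty : l₁ = ∅ := subset_empty_iff.1 (hdisj ▸ subset_inter subset_rfl (h ▸ hl₁P))
    rw [hl₁_empty, rk_empty] at hl₁_rk
    omega
  have hP := isHyperplane_of_rk_add_one_eq (M.isFlat_closure _) (by rw [hP_rk, hrank]; norm_num)
  have he₁H := isHyperplane_of_rk_add_one_eq he₁ (by rw [he₁_rk, hrank]; norm_num)
  have hline : rk M (P ∩ e₁) = 2 := by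
    rw [hhm.rk_inter_of_ne hP he₁H hPe₁, hP_rk, he₁_rk, hrank]
    norm_num
  refine ⟨⟨(M.isFlat_closure _).inter he₁, hline⟩, ?_, ?_⟩
  · exact subset_empty_iff.1 (hdisj ▸ inter_subset_inter_right _ inter_subset_right)
  · exact (rk_mono (union_subset hl₁P inter_subset_left)).trans hP_rk.le

end StickyKantor
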